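/- arXiv:1602.05379 — 2 statements merged into one kernel-verified Lean document; each statement's English description precedes it below -/
import Mathlib

section
/- Let (A, m) be a noetherian local ring of Krull dimension n with residue field k = A/m, and suppose the associated graded ring gr_m A is isomorphic as a graded k-algebra to the polynomial ring k[X_1, ..., X_n]. If x_1, ..., x_n ∈ m are elements whose images in m/m² correspond to X_1, ..., X_n under this isomorphism, then x_1, ..., x_n form a regular sequence in A. -/
/-!
STATEMENT 6: Let (A, m) be a noetherian local ring of Krull dimension n with residue field
k = A/m, and suppose the associated graded ring gr_m A is isomorphic as a graded k-algebra
to the polynomial ring k[X_1, ..., X_n]. If x_1, ..., x_n ∈ m are elements whose images in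
m/m² correspond to X_1, ..., X_n under this isomorphism, then x_1, ..., x_n form a regular
sequence in A.
-/

open CategoryTheory Limits IsLocalRing Polynomial

universe u

set_option maxHeartbeats 1000000
set_option synthInstance.maxHeartbeats 400000

/-- The associated graded ring (tangential cone) `gr_m A = ⊕_{i≥0} mⁱ/mⁱ⁺¹`, realized as
the quotient of the Rees algebra `A[mt] ⊆ A[t]` by the ideal generated by `m`. -/
noncomputable def AssocGraded (A : Type u) [CommRing A] [IsLocalRing A] : Type u :=
  ↥(reesAlgebra (maximalIdeal A)) ⧸
    (Ideal.map (algebraMap A ↥(reesAlgebra (maximalIdeal A))) (maximalIdeal A))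

noncomputable instance (A : Type u) [CommRing A] [IsLocalRing A] :
    CommRing (AssocGraded A) :=
  inferInstanceAs (CommRing (↥(reesAlgebra (maximalIdeal A)) ⧸
    (Ideal.map (algebraMap A ↥(reesAlgebra (maximalIdeal A))) (maximalIdeal A))))

/-- The associated graded ring is an algebra over the residue field `k = A/m`. -/
noncomputable instance (A : Type u) [CommRing A] [IsLocalRing A] :
    Algebra (ResidueField A) (AssocGraded A) :=
  (Ideal.Quotient.lift (maximalIdeal A)
    ((Ideal.Quotient.mk _).comp (algebraMap A ↥(reesAlgebra (maximalIdeal A))) :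
        A →+* AssocGraded A)
    (fun a ha => by
      show (Ideal.Quotient.mk _) _ = 0
      rw [Ideal.Quotient.eq_zero_iff_mem]
      exact Ideal.mem_map_of_mem _ ha)).toAlgebra

/-- The degree-`i` homogeneous component of the associated graded ring, as a `k`-submodule:
the classes of the elements of the Rees algebra concentrated in degree `i`. -/
noncomputable def AssocGraded.piece (A : Type u) [CommRing A] [IsLocalRing A] (i : ℕ) :
    Submodule (ResidueField A) (AssocGraded A) :=
  Submodule.span (ResidueField A)
    (((Ideal.Quotient.mk _ :
        ↥(reesAlgebra (maximalIdeal A)) →+* AssocGraded A)) ''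
      {x : ↥(reesAlgebra (maximalIdeal A)) | ∃ a : A, (x : A[X]) = Polynomial.monomial i a})

/-- The class in the associated graded ring of an element `a ∈ m`, placed in degree 1
(i.e. its image in `m/m²` viewed inside `gr_m A`). -/
noncomputable def AssocGraded.deg1Class (A : Type u) [CommRing A] [IsLocalRing A]
    (a : A) (ha : a ∈ maximalIdeal A) : AssocGraded A :=
  (Ideal.Quotient.mk _ :
      ↥(reesAlgebra (maximalIdeal A)) →+* AssocGraded A)
    (⟨Polynomial.monomial 1 a, reesAlgebra.monomial_mem.mpr (by simpa using ha)⟩ :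
      ↥(reesAlgebra (maximalIdeal A)))

/-!
Through the isomorphism, `X i` is the initial form of `x i`. Write `I_s` for the ideal generated
by the `x i` with `i ∈ s`, and `in(c)` for the class of `c ∈ 𝔪ᵗ` in `𝔪ᵗ/𝔪ᵗ⁺¹`. Suppose the
initial forms of the elements of `I_s` lie in `(X i : i ∈ s)`, and let `j ∉ s`. If `c ∈ 𝔪ᵗ` and
`x j * c ∈ I_s + 𝔪ᵗ⁺²`, then `X j * in(c)` is such an initial form, so `in(c) ∈ (X i : i ∈ s)`
because `X j` is a nonzerodivisor modulo the other variables; lifting a homogeneous expression of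
`in(c)` back to `A` gives `c ∈ I_s + 𝔪ᵗ⁺¹`. Iterating this step shows both that the hypothesis
on `s` passes to `insert j s`, hence holds for every finite `s`, and that `x j * a ∈ I_s` forces
`a ∈ I_s + 𝔪ᵈ` for every `d`, hence `a ∈ I_s` by Krull's intersection theorem.
-/

namespace MvPolynomial

variable {σ R : Type*} [CommSemiring R] {s : Set σ}

theorem mem_span_X_image_of_X_mul_mem {j : σ} (hj : j ∉ s) {g : MvPolynomial σ R}
    (h : X j * g ∈ Ideal.span (X '' s : Set (MvPolynomial σ R))) :
    g ∈ Ideal.span (X '' s : Set (MvPolynomial σ R)) := by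
  rw [mem_ideal_span_X_image] at h ⊢
  intro m hm
  obtain ⟨i, his, hi⟩ := h (Finsupp.single j 1 + m) (by simpa [coeff_X_mul] using hm)
  have hij : i ≠ j := by rintro rfl; exact hj his
  exact ⟨i, his, by simpa [Finsupp.single_apply, hij.symm] using hi⟩

theorem mem_span_X_mul_of_isHomogeneous {g : MvPolynomial σ R} {d : ℕ}
    (hg : g.IsHomogeneous d) (h : g ∈ Ideal.span (X '' s : Set (MvPolynomial σ R))) :
    g ∈ Submodule.span R
      {f | ∃ i ∈ s, ∃ t, t + 1 = d ∧ ∃ q : MvPolynomial σ R, q.IsHomogeneous t ∧ f = X i * q} := by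
  classical
  rw [← g.support_sum_monomial_coeff]
  refine Submodule.sum_mem _ fun m hm => ?_
  obtain ⟨i, hi, hmi⟩ := mem_ideal_span_X_image.mp h m hm
  have hle : Finsupp.single i 1 ≤ m := Finsupp.single_le_iff.mpr (Nat.one_le_iff_ne_zero.mpr hmi)
  have hdeg : (m - Finsupp.single i 1).degree + 1 = d := by
    have hm_deg : m.degree = d := by
      rw [Finsupp.degree_eq_weight_one]; exact hg (mem_support_iff.mp hm)
    rw [← hm_deg, ← tsub_add_cancel_of_le hle, map_add, Finsupp.degree_single,
      add_tsub_cancel_right]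
  have hmono :
      monomial m (coeff m g) = coeff m g • (X i * monomial (m - Finsupp.single i 1) 1) := by
    rw [X, monomial_mul, smul_monomial, add_tsub_cancel_of_le hle, one_mul, smul_eq_mul, mul_one]
  rw [hmono]
  exact Submodule.smul_mem _ _
    (Submodule.subset_span ⟨i, hi, _, hdeg, _, isHomogeneous_monomial _ rfl, rfl⟩)

end MvPolynomial

theorem IsLocalRing.mem_of_forall_mem_sup_pow {R : Type*} [CommRing R] [IsNoetherianRing R]
    [IsLocalRing R] {I : Ideal R} {a : R} (h : ∀ d : ℕ, a ∈ I ⊔ maximalIdeal R ^ d) : a ∈ I := by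
  have hmem : Submodule.Quotient.mk (p := I) a ∈
      (⨅ d : ℕ, maximalIdeal R ^ d • ⊤ : Submodule R (R ⧸ I)) := by
    refine Submodule.mem_iInf _ |>.mpr fun d => ?_
    obtain ⟨b, hb, c, hc, rfl⟩ := Submodule.mem_sup.mp (h d)
    rw [Submodule.Quotient.mk_add, (Submodule.Quotient.mk_eq_zero I).mpr hb, zero_add,
      ← mul_one c, ← smul_eq_mul, Submodule.Quotient.mk_smul]
    exact Submodule.smul_mem_smul hc Submodule.mem_top
  rwa [Ideal.iInf_pow_smul_eq_bot_of_isLocalRing _ (maximalIdeal.isMaximal R).ne_top,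
    Submodule.mem_bot, Submodule.Quotient.mk_eq_zero] at hmem

theorem Ideal.ofList_take_ofFn {R : Type*} [CommSemiring R] {n : ℕ} (x : Fin n → R) (i : ℕ) :
    Ideal.ofList ((List.ofFn x).take i) = Ideal.span (x '' {l | l.val < i}) := by
  refine congrArg Ideal.span (Set.ext fun r => ?_)
  simp only [Set.mem_image, List.mem_iff_getElem, List.getElem_take, List.getElem_ofFn,
    List.length_take, List.length_ofFn, lt_min_iff, Fin.exists_iff]
  grind

namespace AssocGraded

variable {A : Type u} [CommRing A] [IsLocalRing A] {σ : Type*}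

local notation "𝔪" => maximalIdeal A

noncomputable def ofRees : reesAlgebra 𝔪 →+* AssocGraded A := Ideal.Quotient.mk _

theorem ofRees_eq_zero_iff {z : reesAlgebra 𝔪} :
    ofRees z = 0 ↔ z ∈ Ideal.map (algebraMap A (reesAlgebra 𝔪)) 𝔪 :=
  Ideal.Quotient.eq_zero_iff_mem

open Classical in
/-- The class of `a` in `𝔪ᵈ/𝔪ᵈ⁺¹ ⊆ gr_𝔪 A`; it is `0` when `a ∉ 𝔪ᵈ`. -/
noncomputable def mk (d : ℕ) (a : A) : AssocGraded A :=
  if h : a ∈ 𝔪 ^ d then ofRees ⟨monomial d a, reesAlgebra.monomial_mem.mpr h⟩ else 0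

theorem mk_of_mem {d : ℕ} {a : A} (h : a ∈ 𝔪 ^ d) :
    mk d a = ofRees ⟨monomial d a, reesAlgebra.monomial_mem.mpr h⟩ :=
  dif_pos h

theorem mk_one_eq_deg1Class {a : A} (ha : a ∈ 𝔪) : mk 1 a = deg1Class A a ha :=
  mk_of_mem (by simpa using ha)

@[simp]
theorem mk_zero (d : ℕ) : mk (A := A) d 0 = 0 := by
  rw [mk_of_mem (zero_mem _), ← map_zero ofRees]
  congr 1
  ext : 1
  simp

theorem mk_add {d : ℕ} {a b : A} (ha : a ∈ 𝔪 ^ d) (hb : b ∈ 𝔪 ^ d) :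
    mk d (a + b) = mk d a + mk d b := by
  rw [mk_of_mem ha, mk_of_mem hb, mk_of_mem (add_mem ha hb), ← map_add]
  congr 1
  ext : 1
  simp

theorem mk_mul {d e : ℕ} {a b : A} (ha : a ∈ 𝔪 ^ d) (hb : b ∈ 𝔪 ^ e) :
    mk (d + e) (a * b) = mk d a * mk e b := by
  have hab : a * b ∈ 𝔪 ^ (d + e) := pow_add 𝔪 d e ▸ Ideal.mul_mem_mul ha hb
  rw [mk_of_mem ha, mk_of_mem hb, mk_of_mem hab, ← map_mul]
  congr 1
  ext : 1
  simp [monomial_mul_monomial]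

theorem residue_smul_mk {d : ℕ} {a : A} (r : A) (ha : a ∈ 𝔪 ^ d) :
    residue A r • mk d a = mk d (r * a) := by
  rw [Algebra.smul_def, mk_of_mem ha, mk_of_mem (Ideal.mul_mem_left _ r ha)]
  change ofRees (algebraMap A _ r) * _ = _
  rw [← map_mul]
  congr 1
  ext : 1
  simp [← C_mul_monomial]

theorem coeff_mem_pow_succ_of_mem_map {z : reesAlgebra 𝔪}
    (hz : z ∈ Ideal.map (algebraMap A (reesAlgebra 𝔪)) 𝔪) (i : ℕ) :
    (z : A[X]).coeff i ∈ 𝔪 ^ (i + 1) := by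
  obtain ⟨k, c, r, rfl⟩ := Submodule.mem_span_set'.mp hz
  simp only [smul_eq_mul, AddSubmonoidClass.coe_finsetSum, Subalgebra.coe_mul, finsetSum_coeff]
  refine sum_mem fun l _ => ?_
  obtain ⟨a, ha, hra⟩ := (r l).2
  rw [← hra]
  change ((c l : A[X]) * C a).coeff i ∈ _
  rw [coeff_mul_C, pow_succ]
  exact Ideal.mul_mem_mul ((mem_reesAlgebra_iff _ _).mp (c l).2 i) ha

theorem mk_eq_zero_iff {d : ℕ} {a : A} (ha : a ∈ 𝔪 ^ d) : mk d a = 0 ↔ a ∈ 𝔪 ^ (d + 1) := by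
  refine ⟨fun h => ?_, fun h => ?_⟩
  · rw [mk_of_mem ha, ofRees_eq_zero_iff] at h
    simpa using coeff_mem_pow_succ_of_mem_map h d
  · clear ha
    rw [pow_succ'] at h
    induction h using Submodule.mul_induction_on' with
    | mem_mul_mem r hr b hb =>
      rw [← residue_smul_mk r hb, (residue_eq_zero_iff r).mpr hr, zero_smul]
    | add u hu v hv hu0 hv0 =>
      rw [mk_add (Ideal.mul_le_right hu) (Ideal.mul_le_right hv), hu0, hv0, add_zero]

theorem mk_succ_mul {t : ℕ} {r a : A} (hr : r ∈ 𝔪) (ha : a ∈ 𝔪 ^ t) :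
    mk (t + 1) (r * a) = mk 1 r * mk t a := by
  rw [add_comm, mk_mul (by simpa using hr) ha]

theorem mk_mem_piece {d : ℕ} {a : A} (ha : a ∈ 𝔪 ^ d) : mk d a ∈ piece A d := by
  rw [mk_of_mem ha]
  exact Submodule.subset_span ⟨_, ⟨a, rfl⟩, rfl⟩

theorem exists_mk_eq_of_mem_piece {d : ℕ} {z : AssocGraded A} (hz : z ∈ piece A d) :
    ∃ a ∈ 𝔪 ^ d, mk d a = z := by
  induction hz using Submodule.span_induction with
  | mem y hy =>
    obtain ⟨w, ⟨a, hw⟩, rfl⟩ := hy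
    have ha : a ∈ 𝔪 ^ d := by simpa [hw] using (mem_reesAlgebra_iff _ _).mp w.2 d
    refine ⟨a, ha, ?_⟩
    rw [mk_of_mem ha]
    congr 1
    ext : 1
    exact hw.symm
  | zero => exact ⟨0, zero_mem _, mk_zero d⟩
  | add u v _ _ hu hv =>
    obtain ⟨a, ha, rfl⟩ := hu
    obtain ⟨b, hb, rfl⟩ := hv
    exact ⟨a + b, add_mem ha hb, mk_add ha hb⟩
  | smul c z _ hz =>
    obtain ⟨a, ha, rfl⟩ := hz
    obtain ⟨r, rfl⟩ := residue_surjective c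
    exact ⟨r * a, Ideal.mul_mem_left _ r ha, (residue_smul_mk r ha).symm⟩

open MvPolynomial

/-- Through `e`, `X i` stands for the initial form of `x i`; the condition says that these initial
forms, for `i ∈ s`, generate the initial ideal of the ideal spanned by the `x i`, i.e. that they
form a standard basis of it. -/
def IsStandardBasis (e : MvPolynomial σ (ResidueField A) ≃ₐ[ResidueField A] AssocGraded A)
    (x : σ → A) (s : Set σ) : Prop :=
  ∀ d, ∀ f ∈ Ideal.span (x '' s) ⊓ 𝔪 ^ (d + 1), e.symm (mk (d + 1) f) ∈ Ideal.span (X '' s)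

variable {e : MvPolynomial σ (ResidueField A) ≃ₐ[ResidueField A] AssocGraded A} {x : σ → A}
  {s : Set σ}
  (he : ∀ d, Submodule.map e.toLinearMap (homogeneousSubmodule σ (ResidueField A) d) = piece A d)
  (hx : ∀ i, x i ∈ maximalIdeal A) (hcorr : ∀ i, e (MvPolynomial.X i) = mk 1 (x i))

include he

theorem isHomogeneous_symm_mk {d : ℕ} {a : A} (ha : a ∈ 𝔪 ^ d) :
    (e.symm (mk d a)).IsHomogeneous d := by
  obtain ⟨f, hf, hef⟩ := (he d).symm ▸ mk_mem_piece ha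
  rw [← hef]
  simpa using hf

theorem exists_mk_eq_of_isHomogeneous {t : ℕ} {q : MvPolynomial σ (ResidueField A)}
    (hq : q.IsHomogeneous t) : ∃ a ∈ 𝔪 ^ t, mk t a = e q :=
  exists_mk_eq_of_mem_piece (he t ▸ Submodule.mem_map_of_mem hq)

include hx hcorr

theorem mem_span_sup_pow_succ_of_symm_mk_mem {d : ℕ} {c : A} (hc : c ∈ 𝔪 ^ d)
    (h : e.symm (mk d c) ∈ Ideal.span (X '' s)) : c ∈ Ideal.span (x '' s) ⊔ 𝔪 ^ (d + 1) := by
  obtain ⟨b, hb, hbd, hbc⟩ :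
      ∃ b ∈ Ideal.span (x '' s), b ∈ 𝔪 ^ d ∧ mk d b = e (e.symm (mk d c)) := by
    have hg := mem_span_X_mul_of_isHomogeneous (isHomogeneous_symm_mk he hc) h
    generalize e.symm (mk d c) = g at hg
    induction hg using Submodule.span_induction with
    | mem g hg =>
      obtain ⟨i, hi, t, rfl, q, hq, rfl⟩ := hg
      obtain ⟨a, ha, hqa⟩ := exists_mk_eq_of_isHomogeneous he hq
      refine ⟨x i * a, Ideal.mul_mem_right _ _ (Ideal.subset_span ⟨i, hi, rfl⟩), ?_, ?_⟩
      · rw [pow_succ']; exact Ideal.mul_mem_mul (hx i) ha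
      · rw [map_mul, hcorr, ← hqa, mk_succ_mul (hx i) ha]
    | zero => exact ⟨0, zero_mem _, zero_mem _, by simp⟩
    | add g g' _ _ hg hg' =>
      obtain ⟨b, hb, hbd, hbg⟩ := hg
      obtain ⟨b', hb', hbd', hbg'⟩ := hg'
      exact ⟨b + b', add_mem hb hb', add_mem hbd hbd', by rw [mk_add hbd hbd', hbg, hbg', map_add]⟩
    | smul r g _ hg =>
      obtain ⟨b, hb, hbd, hbg⟩ := hg
      obtain ⟨r, rfl⟩ := residue_surjective r
      exact ⟨r * b, Ideal.mul_mem_left _ r hb, Ideal.mul_mem_left _ r hbd,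
        by rw [← residue_smul_mk r hbd, hbg, map_smul]⟩
  rw [e.apply_symm_apply] at hbc
  have hcb : c - b ∈ 𝔪 ^ (d + 1) := by
    rw [← mk_eq_zero_iff (sub_mem hc hbd), ← add_right_inj (mk d b),
      ← mk_add hbd (sub_mem hc hbd), add_sub_cancel, hbc, add_zero]
  simpa using add_mem (Submodule.mem_sup_left hb) (Submodule.mem_sup_right hcb)

theorem IsStandardBasis.mem_span_sup_pow_of_mul_mem (hs : IsStandardBasis e x s) {j : σ}
    (hj : j ∉ s) {t : ℕ} {c : A} (hc : c ∈ 𝔪 ^ t)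
    (h : x j * c ∈ Ideal.span (x '' s) ⊔ 𝔪 ^ (t + 2)) :
    c ∈ Ideal.span (x '' s) ⊔ 𝔪 ^ (t + 1) := by
  obtain ⟨g, hg, r, hr, hgr⟩ := Submodule.mem_sup.mp h
  have hxc : x j * c ∈ 𝔪 ^ (t + 1) := by rw [pow_succ']; exact Ideal.mul_mem_mul (hx j) hc
  have hr' : r ∈ 𝔪 ^ (t + 1) := Ideal.pow_le_pow_right (by omega) hr
  have hg' : g ∈ 𝔪 ^ (t + 1) := by simpa [← hgr] using sub_mem hxc hr'
  have hmk : mk (t + 1) g = e (X j) * mk t c := by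
    rw [hcorr, ← mk_succ_mul (hx j) hc, ← hgr, mk_add hg' hr', (mk_eq_zero_iff hr').mpr hr,
      add_zero]
  refine mem_span_sup_pow_succ_of_symm_mk_mem he hx hcorr hc (mem_span_X_image_of_X_mul_mem hj ?_)
  simpa [hmk] using hs t g ⟨hg, hg'⟩

theorem IsStandardBasis.mem_span_of_mul_mem [IsNoetherianRing A] (hs : IsStandardBasis e x s)
    {j : σ} (hj : j ∉ s) {a : A} (h : x j * a ∈ Ideal.span (x '' s)) :
    a ∈ Ideal.span (x '' s) := by
  refine IsLocalRing.mem_of_forall_mem_sup_pow fun d => ?_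
  induction d with
  | zero => simp
  | succ d ih =>
    obtain ⟨b, hb, c, hc, rfl⟩ := Submodule.mem_sup.mp ih
    have hxc : x j * c ∈ Ideal.span (x '' s) := by
      simpa [mul_add] using sub_mem h (Ideal.mul_mem_left _ (x j) hb)
    exact add_mem (Submodule.mem_sup_left hb)
      (hs.mem_span_sup_pow_of_mul_mem he hx hcorr hj hc (Submodule.mem_sup_left hxc))

theorem IsStandardBasis.exists_sub_mul_mem_span (hs : IsStandardBasis e x s) {j : σ}
    (hj : j ∉ s) {d : ℕ} {f : A} (hf : f ∈ Ideal.span (x '' insert j s)) (hfd : f ∈ 𝔪 ^ (d + 1))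
    {t : ℕ} (ht : t ≤ d) : ∃ a ∈ 𝔪 ^ t, f - x j * a ∈ Ideal.span (x '' s) := by
  induction t with
  | zero =>
    rw [Set.image_insert_eq, Ideal.span_insert, Submodule.mem_sup] at hf
    obtain ⟨u, hu, g, hg, rfl⟩ := hf
    obtain ⟨a, rfl⟩ := Ideal.mem_span_singleton'.mp hu
    exact ⟨a, by simp, by simpa [mul_comm] using hg⟩
  | succ t ih =>
    obtain ⟨a, ha, hfa⟩ := ih (by omega)
    have hxa : x j * a ∈ Ideal.span (x '' s) ⊔ 𝔪 ^ (t + 2) := by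
      simpa using add_mem (Submodule.mem_sup_left (neg_mem hfa))
        (Submodule.mem_sup_right (Ideal.pow_le_pow_right (by omega) hfd))
    obtain ⟨h, hh, a', ha', rfl⟩ :=
      Submodule.mem_sup.mp (hs.mem_span_sup_pow_of_mul_mem he hx hcorr hj ha hxa)
    refine ⟨a', ha', ?_⟩
    convert add_mem hfa (Ideal.mul_mem_left _ (x j) hh) using 1
    ring

theorem IsStandardBasis.insert (hs : IsStandardBasis e x s) {j : σ} (hj : j ∉ s) :
    IsStandardBasis e x (insert j s) := by
  intro d f hf
  obtain ⟨hf, hfd⟩ := Submodule.mem_inf.mp hf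
  obtain ⟨a, ha, hg⟩ := hs.exists_sub_mul_mem_span he hx hcorr hj hf hfd le_rfl
  have hxa : x j * a ∈ 𝔪 ^ (d + 1) := by rw [pow_succ']; exact Ideal.mul_mem_mul (hx j) ha
  have hg' : f - x j * a ∈ 𝔪 ^ (d + 1) := sub_mem hfd hxa
  have hmk : mk (d + 1) f = e (X j) * mk d a + mk (d + 1) (f - x j * a) := by
    rw [hcorr, ← mk_succ_mul (hx j) ha, ← mk_add hxa hg', add_sub_cancel]
  rw [hmk, map_add, map_mul, e.symm_apply_apply]
  exact add_mem (Ideal.mul_mem_right _ _ (Ideal.subset_span ⟨j, Set.mem_insert _ _, rfl⟩))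
    (Ideal.span_mono (Set.image_mono (Set.subset_insert _ _)) (hs d _ ⟨hg, hg'⟩))

theorem isStandardBasis_of_finite (hs : s.Finite) : IsStandardBasis e x s := by
  induction s, hs using Set.Finite.induction_on with
  | empty =>
    rintro d f ⟨hf, -⟩
    simp_all
  | insert hj _ ih => exact ih.insert he hx hcorr hj

end AssocGraded

theorem isRegular_of_assocGraded_polynomial_general
    (A : Type u) [CommRing A] [IsNoetherianRing A] [IsLocalRing A]
    (n : ℕ)
    (e : MvPolynomial (Fin n) (ResidueField A) ≃ₐ[ResidueField A] AssocGraded A)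
    (he : ∀ i : ℕ, Submodule.map e.toLinearMap
      (MvPolynomial.homogeneousSubmodule (Fin n) (ResidueField A) i) = AssocGraded.piece A i)
    (x : Fin n → A) (hx : ∀ i, x i ∈ maximalIdeal A)
    (hcorr : ∀ i : Fin n, e (MvPolynomial.X i) = AssocGraded.deg1Class A (x i) (hx i)) :
    RingTheory.Sequence.IsRegular A (List.ofFn x) := by
  have hcorr' i : e (MvPolynomial.X i) = AssocGraded.mk 1 (x i) :=
    (hcorr i).trans (AssocGraded.mk_one_eq_deg1Class (hx i)).symm
  have hmem r (hr : r ∈ List.ofFn x) : r ∈ maximalIdeal A := by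
    obtain ⟨i, rfl⟩ := List.mem_ofFn.mp hr
    exact hx i
  refine .of_isWeaklyRegular_of_mem_maximalIdeal A hmem ⟨fun i hi => ?_⟩
  have hin : i < n := by simpa using hi
  rw [List.getElem_ofFn, isSMulRegular_quotient_iff_mem_of_smul_mem]
  simp only [smul_eq_mul, Ideal.mul_top, Ideal.ofList_take_ofFn]
  have hstd := AssocGraded.isStandardBasis_of_finite he hx hcorr' (Set.toFinite {l | l.val < i})
  exact fun a => hstd.mem_span_of_mul_mem he hx hcorr' (j := ⟨i, hin⟩) (by simp)

theorem isRegular_of_assocGraded_polynomial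
    (A : Type u) [CommRing A] [IsNoetherianRing A] [IsLocalRing A]
    (n : ℕ) (hdim : ringKrullDim A = n)
    (e : MvPolynomial (Fin n) (ResidueField A) ≃ₐ[ResidueField A] AssocGraded A)
    (he : ∀ i : ℕ, Submodule.map e.toLinearMap
      (MvPolynomial.homogeneousSubmodule (Fin n) (ResidueField A) i) = AssocGraded.piece A i)
    (x : Fin n → A) (hx : ∀ i, x i ∈ maximalIdeal A)
    (hcorr : ∀ i : Fin n, e (MvPolynomial.X i) = AssocGraded.deg1Class A (x i) (hx i)) :
    RingTheory.Sequence.IsRegular A (List.ofFn x) :=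
  isRegular_of_assocGraded_polynomial_general A n e he x hx hcorr
end

section
/- Let (A, m) be a noetherian local ring of finite global dimension, and let p be a prime ideal of A. Then the localization A_p also has finite global dimension. -/
/-!
Localization `R → S` at a submonoid is a flat epimorphism of rings. Flatness makes `S ⊗_R -`
exact, so it carries a projective resolution of an `S`-module `M`, viewed as an `R`-module, to a
projective resolution of `S ⊗_R M ≅ M` (the isomorphism because `R → S` is an epimorphism). By
the extension–restriction adjunction the `Hom`-complex of that resolution into an `S`-module `N`
is the `Hom`-complex of the original resolution into `N` viewed over `R`, so
`Ext_S^q(M, N) = 0` whenever `Ext_R^q(M, N) = 0`; hence `gldh S ≤ gldh R`.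
-/

open CategoryTheory Limits

universe u

/-- The global dimension of a commutative ring: the supremum (in `ℕ∞`) over all pairs of
modules `M, N` of the integers `p` with `Ext_A^p(M, N) ≠ 0`. -/
noncomputable def gldh (A : Type u) [CommRing A] : ℕ∞ :=
  sSup {n : ℕ∞ | ∃ (p : ℕ) (M N : ModuleCat.{u} A),
    n = (p : ℕ∞) ∧ ¬ IsZero (((Ext A (ModuleCat.{u} A) p).obj (Opposite.op M)).obj N)}

namespace CategoryTheory

variable {C D : Type*} [Category C] [Category D] [Abelian C] [Abelian D]
  {F : C ⥤ D} {G : D ⥤ C} [F.Additive]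

lemma exactAt_linearYonedaObj_mapHomologicalComplex {R S : Type*} [Ring R] [Ring S]
    [Linear R C] [Linear S D] (adj : F ⊣ G) (P : ChainComplex C ℕ) (N : D) (j : ℕ)
    (h : (P.linearYonedaObj R (G.obj N)).ExactAt (j + 1)) :
    (ChainComplex.linearYonedaObj ((F.mapHomologicalComplex _).obj P) S N).ExactAt (j + 1) := by
  rw [HomologicalComplex.exactAt_iff' _ j (j + 1) (j + 2) (by simp) (by simp),
    ShortComplex.moduleCat_exact_iff] at h ⊢
  intro (g : F.obj (P.X (j + 1)) ⟶ N) (hg : F.map (P.d (j + 2) (j + 1)) ≫ g = 0)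
  have := adj.right_adjoint_additive
  obtain ⟨(k : P.X j ⟶ G.obj N), hk⟩ := h (adj.homEquiv _ _ g) (by
    change P.d (j + 2) (j + 1) ≫ adj.homEquiv _ _ g = 0
    rw [← adj.homEquiv_naturality_left, hg, adj.homEquiv_unit, Functor.map_zero, comp_zero])
  refine ⟨(adj.homEquiv _ _).symm k, (adj.homEquiv _ _).injective ?_⟩
  change adj.homEquiv _ _ (F.map (P.d (j + 1) j) ≫ (adj.homEquiv _ _).symm k) = _
  rw [adj.homEquiv_naturality_left, Equiv.apply_symm_apply]
  exact hk

variable [F.PreservesHomology] [G.PreservesEpimorphisms]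

noncomputable def ProjectiveResolution.ofAdjunction (adj : F ⊣ G) {M : D}
    [IsIso (adj.counit.app M)] (P : ProjectiveResolution (G.obj M)) : ProjectiveResolution M where
  complex := (F.mapHomologicalComplex _).obj P.complex
  projective n := adj.map_projective _ (P.projective n)
  π := (F.mapHomologicalComplex _).map P.π ≫
    (HomologicalComplex.singleMapHomologicalComplex F _ 0).hom.app _ ≫
    (ChainComplex.single₀ _).map (adj.counit.app M)

lemma isZero_Ext_succ_of_adjunction [EnoughProjectives C] [EnoughProjectives D]
    {R S : Type*} [Ring R] [Ring S] [Linear R C] [Linear S D] (adj : F ⊣ G) {M : D}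
    [IsIso (adj.counit.app M)] (N : D) (j : ℕ)
    (h : IsZero (((Ext R C (j + 1)).obj (Opposite.op (G.obj M))).obj (G.obj N))) :
    IsZero (((Ext S D (j + 1)).obj (Opposite.op M)).obj N) := by
  obtain ⟨P⟩ := HasProjectiveResolution.out (Z := G.obj M)
  refine IsZero.of_iso ?_ ((P.ofAdjunction adj).isoExt (j + 1) N)
  replace h := IsZero.of_iso h (P.isoExt (j + 1) (G.obj N)).symm
  rw [← HomologicalComplex.exactAt_iff_isZero_homology] at h ⊢
  exact exactAt_linearYonedaObj_mapHomologicalComplex adj P.complex N j h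

end CategoryTheory

namespace ModuleCat

variable {R S : Type u} [CommRing R] [CommRing S]

lemma isIso_extendRestrictScalarsAdj_counit_app (f : R →+* S) [Epi (CommRingCat.ofHom f)]
    (Y : ModuleCat.{u} S) : IsIso ((extendRestrictScalarsAdj.{u, u, u} f).counit.app Y) := by
  algebraize [f]
  have : Algebra.IsEpi R S := CommRingCat.epi_iff_epi.mp ‹_›
  let Y' := (restrictScalars f).obj Y
  have : IsScalarTower R S Y' := IsScalarTower.of_algebraMap_smul fun _ _ ↦ rfl
  rw [ConcreteCategory.isIso_iff_bijective]
  refine ⟨Algebra.injective_lift_lsmul R S Y', fun y ↦ ⟨(1 : S) ⊗ₜ[R] (y : Y'), ?_⟩⟩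
  exact ExtendRestrictScalarsAdj.Counit.map_apply_one_tmul f y

lemma isZero_Ext_of_isZero_Ext_restrictScalars (f : R →+* S) (hf : f.Flat)
    [Epi (CommRingCat.ofHom f)] (X Y : ModuleCat.{u} S) (q : ℕ) (hq : q ≠ 0)
    (h : IsZero (((Ext R (ModuleCat.{u} R) q).obj
      (Opposite.op ((restrictScalars f).obj X))).obj ((restrictScalars f).obj Y))) :
    IsZero (((Ext S (ModuleCat.{u} S) q).obj (Opposite.op X)).obj Y) := by
  obtain ⟨j, rfl⟩ := Nat.exists_eq_succ_of_ne_zero hq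
  let adj := extendRestrictScalarsAdj.{u, u, u} f
  have := adj.left_adjoint_additive
  have := preservesFiniteLimits_extendScalars_of_flat hf
  have := isIso_extendRestrictScalarsAdj_counit_app f X
  exact isZero_Ext_succ_of_adjunction adj Y j h

end ModuleCat

lemma gldh_le_iff {A : Type u} [CommRing A] (n : ℕ) :
    gldh A ≤ n ↔ ∀ q, n < q → ∀ M N : ModuleCat.{u} A,
      IsZero (((Ext A (ModuleCat.{u} A) q).obj (Opposite.op M)).obj N) := by
  rw [gldh, sSup_le_iff]
  refine ⟨fun h q hq M N ↦ ?_, ?_⟩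
  · by_contra hne
    exact (Nat.cast_le.mp (h q ⟨q, M, N, rfl, hne⟩)).not_gt hq
  · rintro h _ ⟨q, M, N, rfl, hne⟩
    by_contra! hlt
    exact hne (h q (Nat.cast_lt.mp hlt) M N)

lemma gldh_le_of_flat_of_epi {R S : Type u} [CommRing R] [CommRing S] (f : R →+* S)
    (hf : f.Flat) [Epi (CommRingCat.ofHom f)] : gldh S ≤ gldh R := by
  cases hR : gldh R with
  | top => exact le_top
  | coe n =>
    rw [gldh_le_iff]
    intro q hq X Y
    exact ModuleCat.isZero_Ext_of_isZero_Ext_restrictScalars f hf X Y q (by omega)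
      ((gldh_le_iff n).mp hR.le q hq _ _)

lemma gldh_le_of_isLocalization {R S : Type u} [CommRing R] [CommRing S] (M : Submonoid R)
    [Algebra R S] [IsLocalization M S] : gldh S ≤ gldh R :=
  have := IsLocalization.epi M S
  gldh_le_of_flat_of_epi _ (RingHom.flat_algebraMap_iff.mpr (IsLocalization.flat S M))

theorem gldh_localization_finite_general
    (A : Type u) [CommRing A]
    (hgl : gldh A ≠ ⊤) (p : Ideal A) [p.IsPrime] :
    gldh (Localization.AtPrime p) ≠ ⊤ :=
  ne_top_of_le_ne_top hgl (gldh_le_of_isLocalization p.primeCompl)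

theorem gldh_localization_finite
    (A : Type u) [CommRing A] [IsNoetherianRing A] [IsLocalRing A]
    (hgl : gldh A ≠ ⊤) (p : Ideal A) [p.IsPrime] :
    gldh (Localization.AtPrime p) ≠ ⊤ :=
  gldh_localization_finite_general A hgl p
end
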